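/- arXiv:2011.00455 — 8 statements merged into one kernel-verified Lean document; each statement's English description precedes it below -/
import Mathlib

section
/- Let M be an atomic reduced cancellative monoid in which any two distinct atoms are disjoint (their generated cyclic submonoids intersect only in 0). Then an atom of M is strong if and only if it is pure. -/
/-- `x ≤_M y` : divisibility in the additive monoid `M`. -/
def MDvd {M : Type*} [AddCancelCommMonoid M] (x y : M) : Prop := ∃ z : M, y = x + z

/-- An atom: a nonzero element that is not the sum of two nonzero elements. -/
def IsAtomM {M : Type*} [AddCancelCommMonoid M] (a : M) : Prop :=
  a ≠ 0 ∧ ∀ b c : M, a = b + c → b = 0 ∨ c = 0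

/-- A strong atom: a nonzero `x` such that `y ≤_M k • x` implies `y = l • x`. -/
def StrongAtom {M : Type*} [AddCancelCommMonoid M] (x : M) : Prop :=
  x ≠ 0 ∧ ∀ (y : M) (k : ℕ), MDvd y (k • x) → ∃ l : ℕ, y = l • x

/-- A pure element: a nonzero `x` such that whenever a nonzero `y` satisfies
`y ≤_M k • x` for a positive `k`, then `m • x = n • y` for some positive `m`, `n`. -/
def PureElem {M : Type*} [AddCancelCommMonoid M] (x : M) : Prop :=
  x ≠ 0 ∧ ∀ (y : M) (k : ℕ), y ≠ 0 → 0 < k → MDvd y (k • x) →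
    ∃ m n : ℕ, 0 < m ∧ 0 < n ∧ m • x = n • y

/-- `M` is atomic: every element is a finite sum of atoms. -/
def AtomicM (M : Type*) [AddCancelCommMonoid M] : Prop :=
  ∀ x : M, ∃ l : Multiset M, (∀ a ∈ l, IsAtomM a) ∧ l.sum = x

/-- if `M` is atomic, reduced and any two distinct atoms are disjoint
(`ℕx ∩ ℕy = {0}`), then an atom is strong iff it is pure. -/
theorem strong_iff_pure_of_disjoint_atoms {M : Type*} [AddCancelCommMonoid M]
    (hred : ∀ a b : M, a + b = 0 → a = 0)
    (hatomic : AtomicM M)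
    (hdisj : ∀ x y : M, IsAtomM x → IsAtomM y → x ≠ y →
      ∀ m n : ℕ, m • x = n • y → m • x = 0)
    (a : M) (ha : IsAtomM a) :
    StrongAtom a ↔ PureElem a := by
  have hsmul0 : ∀ (m : ℕ) (x : M), 0 < m → m • x = 0 → x = 0 := by
    intro m x hm hx
    obtain ⟨m', rfl⟩ := Nat.exists_eq_succ_of_ne_zero hm.ne'
    rw [succ_nsmul] at hx
    exact hred x (m' • x) (by rwa [add_comm] at hx)
  constructor
  · rintro ⟨hne, hs⟩
    refine ⟨hne, fun y k hy hk hd => ?_⟩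
    obtain ⟨l, hl⟩ := hs y k hd
    have hl0 : 0 < l := by
      rcases Nat.eq_zero_or_pos l with h | h
      · exact absurd (by simpa [h] using hl) hy
      · exact h
    exact ⟨l, 1, hl0, one_pos, by simp [hl]⟩
  · rintro ⟨hne, hp⟩
    refine ⟨hne, fun y k hd => ?_⟩
    rcases eq_or_ne y 0 with rfl | hy
    · exact ⟨0, by simp⟩
    rcases Nat.eq_zero_or_pos k with rfl | hk
    · obtain ⟨z, hz⟩ := hd
      simp only [zero_smul] at hz
      exact absurd (hred y z hz.symm) hy
    obtain ⟨ly, hly, hsum⟩ := hatomic y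
    have hall : ∀ b ∈ ly, b = a := by
      intro b hb
      have hbatom := hly b hb
      have hble : MDvd b (k • a) := by
        obtain ⟨z, hz⟩ := hd
        obtain ⟨w, hw⟩ := Multiset.exists_cons_of_mem hb
        refine ⟨w.sum + z, ?_⟩
        rw [hz, ← hsum, hw]
        simp [add_assoc]
      obtain ⟨m, n, hm, hn, hmn⟩ := hp b k hbatom.1 hk hble
      by_contra hba
      have := hdisj a b ha hbatom (Ne.symm hba) m n hmn
      exact ha.1 (hsmul0 m a hm this)
    have key : ∀ s : Multiset M, (∀ b ∈ s, b = a) → s.sum = Multiset.card s • a := by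
      intro s
      induction s using Multiset.induction with
      | empty => simp
      | cons c t ih =>
          intro h
          rw [Multiset.sum_cons, h c (Multiset.mem_cons_self c t),
            ih (fun b hb => h b (Multiset.mem_cons_of_mem hb)),
            Multiset.card_cons, succ_nsmul, add_comm]
    exact ⟨Multiset.card ly, by rw [← hsum, key ly hall]⟩
end

section
/- Let M be a reduced root-closed cancellative monoid. Then any two distinct atoms of M are disjoint, i.e., if x and y are atoms with ℕx ∩ ℕy ≠ {0}, then x = y. -/
/-- `M` is root-closed: `n • a ≤_M n • b` for a positive `n` implies `a ≤_M b`. -/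
def RootClosedM (M : Type*) [AddCancelCommMonoid M] : Prop :=
  ∀ (n : ℕ) (a b : M), 0 < n → MDvd (n • a) (n • b) → MDvd a b

/-- in a reduced root-closed cancellative monoid, any two distinct atoms
are disjoint: if `ℕx ∩ ℕy ≠ {0}` for atoms `x`, `y`, then `x = y`. -/
theorem atoms_disjoint_of_rootClosed {M : Type*} [AddCancelCommMonoid M]
    (hred : ∀ a b : M, a + b = 0 → a = 0)
    (hrc : RootClosedM M)
    (x y : M) (hx : IsAtomM x) (hy : IsAtomM y)
    (h : ∃ m n : ℕ, m • x = n • y ∧ m • x ≠ 0) :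
    x = y := by
  obtain ⟨m, n, heq, hne⟩ := h
  have hm : 0 < m := by
    rcases Nat.eq_zero_or_pos m with h0 | h0
    · subst h0; simp at hne
    · exact h0
  have hn : 0 < n := by
    rcases Nat.eq_zero_or_pos n with h0 | h0
    · subst h0; simp at heq; exact absurd heq hne
    · exact h0
  rcases le_total m n with hmn | hnm
  · have hd : MDvd ((m * n) • y) ((m * n) • x) := by
      refine ⟨(m * (n - m)) • x, ?_⟩
      have h1 : (m * n) • x = (m * m) • x + (m * (n - m)) • x := by
        rw [← add_nsmul, ← Nat.mul_add, Nat.add_sub_cancel' hmn]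
      rw [h1]
      congr 1
      rw [mul_smul, mul_smul, heq]
    obtain ⟨z, hz⟩ := hrc (m * n) y x (Nat.mul_pos hm hn) hd
    rcases hx.2 y z hz with h0 | h0
    · exact absurd h0 hy.1
    · rw [h0, add_zero] at hz; exact hz
  · have hd : MDvd ((m * n) • x) ((m * n) • y) := by
      refine ⟨(n * (m - n)) • y, ?_⟩
      have h1 : (m * n) • y = (n * n) • y + (n * (m - n)) • y := by
        rw [← add_nsmul, ← Nat.mul_add, Nat.add_sub_cancel' hnm, Nat.mul_comm]
      rw [h1]
      congr 1
      rw [Nat.mul_comm m n, mul_smul, mul_smul, heq]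
    obtain ⟨z, hz⟩ := hrc (m * n) x y (Nat.mul_pos hm hn) hd
    rcases hy.2 x z hz with h0 | h0
    · exact absurd h0 hx.1
    · rw [h0, add_zero] at hz; exact hz.symm
end

section
/- In a root-closed atomic reduced cancellative monoid, an atom is pure if and only if it is strong. -/
section

variable {M : Type*} [AddCancelCommMonoid M]

theorem MDvd.trans {x y z : M} (hxy : MDvd x y) (hyz : MDvd y z) : MDvd x z := by
  obtain ⟨u, rfl⟩ := hxy
  obtain ⟨v, rfl⟩ := hyz
  exact ⟨u + v, add_assoc x u v⟩

theorem mdvd_nsmul_of_le (a : M) {k l : ℕ} (hkl : k ≤ l) : MDvd (k • a) (l • a) :=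
  ⟨(l - k) • a, by rw [← add_nsmul, Nat.add_sub_cancel' hkl]⟩

theorem mdvd_sum_of_mem {s : Multiset M} {b : M} (hb : b ∈ s) : MDvd b s.sum := by
  obtain ⟨t, rfl⟩ := Multiset.exists_cons_of_mem hb
  exact ⟨t.sum, Multiset.sum_cons b t⟩

theorem IsAtomM.eq_of_mdvd {a b : M} (hb : IsAtomM b) (ha : a ≠ 0) (hab : MDvd a b) : a = b := by
  obtain ⟨c, hc⟩ := hab
  rcases hb.2 a c hc with ha' | hc0
  · exact absurd ha' ha
  · rw [hc, hc0, add_zero]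

theorem RootClosedM.mdvd_of_nsmul_eq_nsmul (hrc : RootClosedM M) {a b : M} {m n : ℕ}
    (hm : 0 < m) (hnm : n ≤ m) (h : m • a = n • b) : MDvd a b :=
  hrc m a b hm (h ▸ mdvd_nsmul_of_le b hnm)

theorem RootClosedM.eq_of_nsmul_eq_nsmul (hrc : RootClosedM M) {a b : M}
    (ha : IsAtomM a) (hb : IsAtomM b) {m n : ℕ} (hm : 0 < m) (hn : 0 < n)
    (h : m • a = n • b) : a = b := by
  rcases le_total n m with hnm | hmn
  · exact hb.eq_of_mdvd ha.1 (hrc.mdvd_of_nsmul_eq_nsmul hm hnm h)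
  · exact (ha.eq_of_mdvd hb.1 (hrc.mdvd_of_nsmul_eq_nsmul hn hmn h.symm)).symm

theorem StrongAtom.pureElem {x : M} (hx : StrongAtom x) : PureElem x := by
  refine ⟨hx.1, fun y k hy _ hyk => ?_⟩
  obtain ⟨l, rfl⟩ := hx.2 y k hyk
  have hl : 0 < l := Nat.pos_of_ne_zero fun hl => hy (by rw [hl, zero_nsmul])
  exact ⟨l, 1, hl, one_pos, (one_nsmul _).symm⟩

theorem PureElem.strongAtom (hatomic : AtomicM M) (hrc : RootClosedM M) {a : M}
    (ha : IsAtomM a) (hp : PureElem a) : StrongAtom a := by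
  refine ⟨ha.1, fun y k hyk => ?_⟩
  -- `k + 1` rather than `k`, since purity only speaks about positive multiples
  have hy : MDvd y ((k + 1) • a) := hyk.trans (mdvd_nsmul_of_le a k.le_succ)
  obtain ⟨s, hs, rfl⟩ := hatomic y
  have hs_eq : ∀ b ∈ s, b = a := fun b hb => by
    obtain ⟨m, n, hm, hn, h⟩ :=
      hp.2 b (k + 1) (hs b hb).1 k.succ_pos ((mdvd_sum_of_mem hb).trans hy)
    exact (hrc.eq_of_nsmul_eq_nsmul ha (hs b hb) hm hn h).symm
  exact ⟨Multiset.card s, by rw [Multiset.eq_replicate_of_mem hs_eq, Multiset.sum_replicate,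
    Multiset.card_replicate]⟩

end

theorem pure_iff_strong_of_rootClosed_general {M : Type*} [AddCancelCommMonoid M]
    (hatomic : AtomicM M) (hrc : RootClosedM M)
    (a : M) (ha : IsAtomM a) :
    PureElem a ↔ StrongAtom a :=
  ⟨PureElem.strongAtom hatomic hrc ha, StrongAtom.pureElem⟩

/-- in a root-closed, atomic, reduced cancellative monoid, an atom is pure
iff it is strong. -/
theorem pure_iff_strong_of_rootClosed {M : Type*} [AddCancelCommMonoid M]
    (hred : ∀ a b : M, a + b = 0 → a = 0)
    (hatomic : AtomicM M) (hrc : RootClosedM M)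
    (a : M) (ha : IsAtomM a) :
    PureElem a ↔ StrongAtom a :=
  pure_iff_strong_of_rootClosed_general hatomic hrc a ha
end

section
/- Every affine semigroup (finitely generated submonoid of ℕ^n) is an extraction monoid: for any nonzero x,y in M, the extraction grade λ_M(x,y) = sup{m/n : mx ≤_M ny, m,n ∈ ℕ, n ≠ 0} is a rational number attained by some pair (m,n) with mx ≤_M ny. -/
open scoped ENNReal

/-- `x ≤_M y` inside the submonoid `M` of `ℕ^d`. -/
def SDvd {d : ℕ} (M : AddSubmonoid (Fin d → ℕ)) (x y : Fin d → ℕ) : Prop :=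
  ∃ z ∈ M, y = x + z

/-- The extraction grade `λ_M(x,y) = sup { m/n : m • x ≤_M n • y, n ≠ 0 }`,
valued in `ℝ≥0∞`. -/
noncomputable def extractionGrade {d : ℕ} (M : AddSubmonoid (Fin d → ℕ))
    (x y : Fin d → ℕ) : ℝ≥0∞ :=
  sSup {r : ℝ≥0∞ | ∃ m n : ℕ, 0 < n ∧ r = (m : ℝ≥0∞) / (n : ℝ≥0∞) ∧
    SDvd M (m • x) (n • y)}

/-!
The pairs `(m, n)` with `m • x ≤_M n • y` form a submonoid of `ℕ²`. If `a₁, …, aₖ` generate `M`,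
it is the projection of the monoid of solutions `(c, m, n) ∈ ℕᵏ × ℕ × ℕ` of
`∑ cᵢ • aᵢ + m • x = n • y`, which is finitely generated by Gordan's lemma. As `x ≠ 0`, every
pair `(m, 0)` in it has `m = 0`, so the ratio `m / n` is bounded on the whole monoid by the
largest ratio among its finitely many generators, and that bound is attained.
-/

theorem AddSubmonoid.FG.exists_max_ratio {S : AddSubmonoid (ℕ × ℕ)} (hS : S.FG)
    (hzero : ∀ m, (m, 0) ∈ S → m = 0) (hpos : ∃ p ∈ S, 0 < p.2) :
    ∃ p ∈ S, 0 < p.2 ∧ ∀ r ∈ S, r.1 * p.2 ≤ p.1 * r.2 := by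
  obtain ⟨G, rfl⟩ := hS
  have hG : (G.filter (0 < ·.2)).Nonempty := by
    by_contra hG
    have hsnd : ∀ r ∈ AddSubmonoid.closure (G : Set (ℕ × ℕ)), r.2 = 0 := fun r hr => by
      induction hr using AddSubmonoid.closure_induction with
      | mem r hr => by_contra hr2; exact hG ⟨r, Finset.mem_filter.mpr ⟨hr, Nat.pos_of_ne_zero hr2⟩⟩
      | zero => rfl
      | add r s _ _ hr hs => simp [hr, hs]
    obtain ⟨p, hp, hp2⟩ := hpos
    exact hp2.ne' (hsnd p hp)
  obtain ⟨p, hp, hmax⟩ := (G.filter (0 < ·.2)).exists_max_image (fun r => (r.1 : ℚ) / r.2) hG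
  obtain ⟨hpG, hp2⟩ := Finset.mem_filter.mp hp
  refine ⟨p, AddSubmonoid.subset_closure hpG, hp2, fun r hr => ?_⟩
  induction hr using AddSubmonoid.closure_induction with
  | mem r hr =>
    rcases Nat.eq_zero_or_pos r.2 with hr2 | hr2
    · simp [hzero r.1 (hr2 ▸ AddSubmonoid.subset_closure hr)]
    · have := hmax r (Finset.mem_filter.mpr ⟨hr, hr2⟩)
      rw [div_le_div_iff₀ (by exact_mod_cast hr2) (by exact_mod_cast hp2)] at this
      exact_mod_cast this
  | zero => simp
  | add r s _ _ hr hs =>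
    simp only [Prod.fst_add, Prod.snd_add, add_mul, mul_add]
    exact add_le_add hr hs

section ExtractionPairs

variable {d : ℕ} (M : AddSubmonoid (Fin d → ℕ)) (x y : Fin d → ℕ)

def extractionPairs : AddSubmonoid (ℕ × ℕ) where
  carrier := {p | SDvd M (p.1 • x) (p.2 • y)}
  zero_mem' := ⟨0, M.zero_mem, by simp⟩
  add_mem' := by
    rintro ⟨m, n⟩ ⟨m', n'⟩ ⟨z, hz, h⟩ ⟨z', hz', h'⟩
    refine ⟨z + z', M.add_mem hz hz', ?_⟩
    simp only [Prod.mk_add_mk, add_smul, h, h']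
    abel

theorem mem_extractionPairs {m n : ℕ} :
    (m, n) ∈ extractionPairs M x y ↔ SDvd M (m • x) (n • y) :=
  Iff.rfl

theorem eq_zero_of_mk_zero_mem_extractionPairs (hx : x ≠ 0) {m : ℕ}
    (h : (m, 0) ∈ extractionPairs M x y) : m = 0 := by
  obtain ⟨z, -, h⟩ := h
  rw [zero_smul, eq_comm, add_eq_zero] at h
  exact (smul_eq_zero.mp h.1).resolve_right hx

theorem extractionPairs_fg (hM : M.FG) : (extractionPairs M x y).FG := by
  obtain ⟨s, rfl⟩ := hM
  let lhs : (↥(s : Set (Fin d → ℕ)) → ℕ) × ℕ × ℕ →+ (Fin d → ℕ) :=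
    (Fintype.linearCombination ℕ Subtype.val).toAddMonoidHom.coprod
      ((multiplesHom _ x).coprod 0)
  let rhs : (↥(s : Set (Fin d → ℕ)) → ℕ) × ℕ × ℕ →+ (Fin d → ℕ) :=
    AddMonoidHom.coprod 0 (AddMonoidHom.coprod 0 (multiplesHom _ y))
  convert (AddSubmonoid.fg_eqLocusM lhs rhs).map (AddMonoidHom.snd _ _)
  ext ⟨m, n⟩
  simp only [mem_extractionPairs, SDvd, AddSubmonoid.mem_closure_iff_of_fintype,
    AddSubmonoid.mem_map, AddMonoidHom.mem_eqLocusM]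
  constructor
  · rintro ⟨_, ⟨c, rfl⟩, h⟩
    refine ⟨(c, m, n), ?_, rfl⟩
    simp [lhs, rhs, Fintype.linearCombination_apply, h, add_comm]
  · rintro ⟨⟨c, m, n⟩, h, hmn⟩
    obtain ⟨rfl, rfl⟩ := Prod.mk.inj hmn
    refine ⟨_, ⟨c, rfl⟩, ?_⟩
    simpa [lhs, rhs, Fintype.linearCombination_apply, add_comm, eq_comm] using h

end ExtractionPairs

theorem extractionGrade_eq_div {d : ℕ} {M : AddSubmonoid (Fin d → ℕ)} {x y : Fin d → ℕ}
    {p q : ℕ} (hq : 0 < q) (hpq : SDvd M (p • x) (q • y))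
    (hmax : ∀ m n, SDvd M (m • x) (n • y) → m * q ≤ p * n) :
    extractionGrade M x y = (p : ℝ≥0∞) / q := by
  refine le_antisymm (sSup_le ?_) (le_sSup ⟨p, q, hq, rfl, hpq⟩)
  rintro _ ⟨m, n, hn, rfl, hmn⟩
  rw [ENNReal.div_le_iff (by positivity) (by simp), div_eq_mul_inv, mul_right_comm,
    ← div_eq_mul_inv, ENNReal.le_div_iff_mul_le (by simp [hq.ne']) (by simp)]
  exact_mod_cast hmax m n hmn

/-- every affine semigroup (finitely generated submonoid of `ℕ^d`) is an
extraction monoid: for any nonzero `x, y ∈ M` the extraction grade is a rational value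
`m / n` attained by some pair `(m, n)` with `m • x ≤_M n • y`. -/
theorem affine_semigroup_is_extraction_monoid {d : ℕ}
    (M : AddSubmonoid (Fin d → ℕ)) (hfg : M.FG) :
    ∀ x ∈ M, ∀ y ∈ M, x ≠ 0 → y ≠ 0 →
      ∃ m n : ℕ, 0 < n ∧ SDvd M (m • x) (n • y) ∧
        extractionGrade M x y = (m : ℝ≥0∞) / (n : ℝ≥0∞) := by
  intro x _ y hy hx _
  have hunit : ((0, 1) : ℕ × ℕ) ∈ extractionPairs M x y := ⟨y, hy, by simp⟩
  obtain ⟨⟨p, q⟩, hpq, hq, hmax⟩ := (extractionPairs_fg M x y hfg).exists_max_ratio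
    (fun _ => eq_zero_of_mk_zero_mem_extractionPairs M x y hx) ⟨_, hunit, Nat.one_pos⟩
  exact ⟨p, q, hq, hpq, extractionGrade_eq_div hq hpq fun m n h => hmax (m, n) h⟩
end

section
/- Let M be an affine semigroup and let x be an atom of M. Then x is pure if and only if x is an extremal ray, i.e., ℚ₊x is a face of the rational cone generated by M. -/
/-- The coercion of a vector of naturals to a vector of rationals. -/
def coeQ {d : ℕ} (x : Fin d → ℕ) : Fin d → ℚ := fun i => (x i : ℚ)

/-- An atom of the affine semigroup `M`. -/
def IsAtomOf {d : ℕ} (M : AddSubmonoid (Fin d → ℕ)) (a : Fin d → ℕ) : Prop :=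
  a ∈ M ∧ a ≠ 0 ∧ ∀ b ∈ M, ∀ c ∈ M, a = b + c → b = 0 ∨ c = 0

/-- A pure element of `M`: whenever a nonzero `y ∈ M` satisfies `y ≤_M k • x` with
`k` positive, then `m • x = n • y` for some positive integers `m`, `n`. -/
def PureOf {d : ℕ} (M : AddSubmonoid (Fin d → ℕ)) (x : Fin d → ℕ) : Prop :=
  x ≠ 0 ∧ ∀ y ∈ M, ∀ k : ℕ, y ≠ 0 → 0 < k → SDvd M y (k • x) →
    ∃ m n : ℕ, 0 < m ∧ 0 < n ∧ m • x = n • y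

/-- The rational cone generated by `M`: all nonnegative rational combinations of
elements of `M`; since `M` is closed under addition and `ℕ`-scaling, these are exactly
the `v` with `k • v ∈ M` for some positive integer `k`. -/
def coneOf {d : ℕ} (M : AddSubmonoid (Fin d → ℕ)) : Set (Fin d → ℚ) :=
  {v | ∃ k : ℕ, 0 < k ∧ ∃ x ∈ M, (k : ℚ) • v = coeQ x}

/-- The nonnegative rational ray through `a`. -/
def rayQ {d : ℕ} (a : Fin d → ℕ) : Set (Fin d → ℚ) :=
  {v | ∃ r : ℚ, 0 ≤ r ∧ v = r • coeQ a}

lemma pure_forward {d : ℕ} (M : AddSubmonoid (Fin d → ℕ)) (x : Fin d → ℕ)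
    (hp : PureOf M x) (y z : Fin d → ℚ) (hy : y ∈ coneOf M) (hz : z ∈ coneOf M)
    (r : ℚ) (hr : 0 ≤ r) (hsum : y + z = r • coeQ x) : y ∈ rayQ x := by
  obtain ⟨k₁, hk₁, a, ha, hka⟩ := hy
  obtain ⟨k₂, hk₂, b, hb, hkb⟩ := hz
  have hyi : ∀ i, (k₁ : ℚ) * y i = a i := fun i => by
    simpa [coeQ] using congrFun hka i
  have hzi : ∀ i, (k₂ : ℚ) * z i = b i := fun i => by
    simpa [coeQ] using congrFun hkb i
  have hsi : ∀ i, y i + z i = r * x i := fun i => by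
    simpa [coeQ] using congrFun hsum i
  by_cases hazero : a = 0
  · refine ⟨0, le_refl _, funext fun i => ?_⟩
    have h1 := hyi i
    rw [hazero] at h1
    have hk₁' : (k₁ : ℚ) ≠ 0 := Nat.cast_ne_zero.2 hk₁.ne'
    have : y i = 0 := by
      have := h1
      simp at this
      rcases this with h | h
      · exact absurd h hk₁.ne'
      · exact h
    simpa using this
  · set p : ℕ := r.num.toNat with hp'
    set q : ℕ := r.den with hq'
    have hq : 0 < q := r.pos
    have hpc : ((p : ℚ)) = (r.num : ℚ) := by
      rw [hp']
      exact_mod_cast Int.toNat_of_nonneg (Rat.num_nonneg.2 hr)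
    have hqr : (q : ℚ) * r = p := by
      rw [hpc]
      rw [hq']
      rw [mul_comm]
      exact_mod_cast Rat.mul_den_eq_num r
    -- main rational equation
    have key : ∀ i, (q * k₂ : ℚ) * a i + (q * k₁ : ℚ) * b i = (k₁ * k₂ * p : ℚ) * x i := by
      intro i
      have h1 := hyi i
      have h2 := hzi i
      have h3 := hsi i
      have : (q : ℚ) * k₁ * k₂ * (y i + z i) = (q:ℚ) * k₁ * k₂ * (r * x i) := by rw [h3]
      have h4 : (q * k₂ : ℚ) * ((k₁:ℚ) * y i) + (q * k₁ : ℚ) * ((k₂:ℚ) * z i)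
          = (k₁ * k₂ : ℚ) * ((q:ℚ) * r) * x i := by ring_nf; linarith [this]
      rw [h1, h2, hqr] at h4
      push_cast at h4 ⊢
      linarith [h4]
    -- natural equation
    have keyN : (k₁ * k₂ * p) • x = (q * k₂) • a + (q * k₁) • b := by
      funext i
      have := key i
      have : ((((q*k₂) • a + (q*k₁) • b) i : ℕ) : ℚ) = (((k₁*k₂*p) • x) i : ℚ) := by
        simp [Pi.add_apply, Pi.smul_apply, smul_eq_mul]
        push_cast
        linarith [key i]
      exact_mod_cast this.symm
    by_cases hp0 : p = 0
    · exfalso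
      apply hazero
      funext i
      have hi := congrFun keyN i
      simp only [Pi.add_apply, Pi.smul_apply, smul_eq_mul, hp0, Nat.mul_zero,
        Nat.zero_mul] at hi
      have h2 : q * k₂ * a i = 0 := by omega
      rcases Nat.mul_eq_zero.1 h2 with h | h
      · exact absurd h (Nat.mul_ne_zero hq.ne' hk₂.ne')
      · exact h
    · have hppos : 0 < p := Nat.pos_of_ne_zero hp0
      have hy'ne : (q * k₂) • a ≠ 0 := by
        intro h
        apply hazero
        funext i
        have hi := congrFun h i
        simp only [Pi.smul_apply, smul_eq_mul, Pi.zero_apply] at hi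
        show a i = 0
        rcases Nat.mul_eq_zero.1 hi with h | h
        · exact absurd h (Nat.mul_ne_zero hq.ne' hk₂.ne')
        · exact h
      obtain ⟨m, n, hm, hn, hmn⟩ := hp.2 ((q*k₂) • a) (M.nsmul_mem ha _)
        (k₁*k₂*p) hy'ne (by positivity)
        ⟨(q*k₁) • b, M.nsmul_mem hb _, keyN⟩
      -- m • x = n • ((q*k₂) • a)
      refine ⟨(m : ℚ) / ((n : ℚ) * q * k₂ * k₁), by positivity, funext fun i => ?_⟩
      have hi := congrFun hmn i
      simp only [Pi.smul_apply, smul_eq_mul] at hi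
      have hiQ : (m : ℚ) * x i = (n : ℚ) * ((q:ℚ) * (k₂:ℚ) * a i) := by
        exact_mod_cast hi
      have h1 := hyi i
      have hk₁' : (k₁ : ℚ) ≠ 0 := Nat.cast_ne_zero.2 hk₁.ne'
      have hk₂' : (k₂ : ℚ) ≠ 0 := Nat.cast_ne_zero.2 hk₂.ne'
      have hq' : (q : ℚ) ≠ 0 := Nat.cast_ne_zero.2 hq.ne'
      have hn' : (n : ℚ) ≠ 0 := Nat.cast_ne_zero.2 hn.ne'
      simp only [Pi.smul_apply, smul_eq_mul, coeQ]
      have h5 : (n:ℚ)*q*k₂*((k₁:ℚ)*y i) = (n:ℚ)*q*k₂*(a i) := by rw [h1]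
      field_simp
      linarith [h5, hiQ]

/-- an atom `x` of an affine semigroup `M` is pure iff it is an
extremal ray, i.e. `ℚ₊x` is a face of `cone(M)`. -/
theorem pure_iff_extremal_ray {d : ℕ} (M : AddSubmonoid (Fin d → ℕ)) (hfg : M.FG)
    (x : Fin d → ℕ) (hx : IsAtomOf M x) :
    PureOf M x ↔
      ∀ y ∈ coneOf M, ∀ z ∈ coneOf M, y + z ∈ rayQ x → y ∈ rayQ x ∧ z ∈ rayQ x := by
  constructor
  · intro hp y hy z hz ⟨r, hr, hray⟩
    exact ⟨pure_forward M x hp y z hy hz r hr hray,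
      pure_forward M x hp z y hz hy r hr (by rw [add_comm]; exact hray)⟩
  · intro h
    refine ⟨hx.2.1, ?_⟩
    rintro y hy k hyne hk ⟨z, hz, hkx⟩
    have hyc : coeQ y ∈ coneOf M := ⟨1, one_pos, y, hy, by simp⟩
    have hzc : coeQ z ∈ coneOf M := ⟨1, one_pos, z, hz, by simp⟩
    have hray : coeQ y + coeQ z ∈ rayQ x := by
      refine ⟨(k : ℚ), by positivity, funext fun i => ?_⟩
      have hi := congrFun hkx i
      simp only [Pi.add_apply, Pi.smul_apply, smul_eq_mul] at hi ⊢
      simp only [coeQ, Pi.smul_apply, smul_eq_mul]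
      exact_mod_cast hi.symm
    obtain ⟨⟨r, hr, hyr⟩, -⟩ := h (coeQ y) hyc (coeQ z) hzc hray
    have hyri : ∀ i, (y i : ℚ) = r * x i := fun i => by
      simpa [coeQ] using congrFun hyr i
    have hrpos : 0 < r := by
      rcases hr.lt_or_eq with h' | h'
      · exact h'
      · exfalso
        apply hyne
        funext i
        have := hyri i
        rw [← h'] at this
        simpa using this
    refine ⟨r.num.toNat, r.den, ?_, r.pos, funext fun i => ?_⟩
    · simpa using Rat.num_pos.2 hrpos
    · have hpc : ((r.num.toNat : ℕ) : ℚ) = (r.num : ℚ) := by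
        exact_mod_cast Int.toNat_of_nonneg (Rat.num_nonneg.2 hr)
      have hqr : (r.den : ℚ) * r = (r.num.toNat : ℚ) := by
        rw [hpc, mul_comm]
        exact_mod_cast Rat.mul_den_eq_num r
      have : ((r.num.toNat : ℚ)) * x i = (r.den : ℚ) * y i := by
        rw [hyri i, ← hqr]; ring
      simp only [Pi.smul_apply, smul_eq_mul]
      exact_mod_cast this
end

section
/- Let M be a full affine semigroup in ℕ^n and let A ⊆ M. Then the Apéry set Ap(M,A) = M \ (A + M) equals {y ∈ M : λ_M(x,y) < 1 for all x ∈ A}, where λ_M is the extraction grade. -/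
open scoped ENNReal

/-- The Apéry set `Ap(M,A) = M \ (A + M)`. -/
def AperySet {d : ℕ} (M : AddSubmonoid (Fin d → ℕ)) (A : Set (Fin d → ℕ)) :
    Set (Fin d → ℕ) :=
  {y | y ∈ M ∧ ∀ a ∈ A, ¬ SDvd M a y}

/-- for a full affine semigroup `M ⊆ ℕ^d` and `A ⊆ M`,
`Ap(M,A) = { y ∈ M | λ_M(x,y) < 1 for all x ∈ A }`. -/
theorem apery_eq_extraction_lt_one {d : ℕ} (M : AddSubmonoid (Fin d → ℕ)) (hfg : M.FG)
    (hfull : ∀ x ∈ M, ∀ y ∈ M, (∀ i, x i ≤ y i) → ∃ z ∈ M, y = x + z)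
    (A : Set (Fin d → ℕ)) (hA : A ⊆ (M : Set (Fin d → ℕ))) :
    AperySet M A = {y | y ∈ M ∧ ∀ x ∈ A, extractionGrade M x y < 1} := by
  ext y
  simp only [AperySet, Set.mem_setOf_eq]
  constructor
  · rintro ⟨hyM, hap⟩
    refine ⟨hyM, fun x hx => ?_⟩
    -- since ¬ SDvd M x y for x ∈ A, by fullness there is i with y i < x i
    have hnot : ¬ ∀ i, x i ≤ y i := by
      intro h
      exact hap x hx (hfull x (hA hx) y hyM h)
    push_neg at hnot
    obtain ⟨i, hi⟩ := hnot
    have hxi0 : (x i : ℝ≥0∞) ≠ 0 := by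
      simp only [ne_eq, Nat.cast_eq_zero]
      omega
    have hxit : (x i : ℝ≥0∞) ≠ ∞ := ENNReal.natCast_ne_top _
    -- bound: extractionGrade ≤ y i / x i < 1
    have hbound : extractionGrade M x y ≤ (y i : ℝ≥0∞) / (x i : ℝ≥0∞) := by
      apply sSup_le
      rintro r ⟨m, n, hn, rfl, z, hzM, hz⟩
      have hmn : m * x i ≤ n * y i := by
        have := congrFun hz i
        simp only [Pi.add_apply, Pi.smul_apply, smul_eq_mul] at this
        omega
      have hn0 : (n : ℝ≥0∞) ≠ 0 := by
        simp only [ne_eq, Nat.cast_eq_zero]; omega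
      rw [ENNReal.le_div_iff_mul_le (Or.inl hxi0) (Or.inl hxit),
        div_eq_mul_inv, mul_right_comm, ← div_eq_mul_inv, ENNReal.div_le_iff hn0 (ENNReal.natCast_ne_top _)]
      calc ((m : ℝ≥0∞) * x i) = ((m * x i : ℕ) : ℝ≥0∞) := by push_cast; ring
        _ ≤ ((n * y i : ℕ) : ℝ≥0∞) := by exact_mod_cast Nat.cast_le.mpr hmn
        _ = (y i : ℝ≥0∞) * n := by push_cast; ring
    refine lt_of_le_of_lt hbound ?_
    rw [ENNReal.div_lt_iff (Or.inl hxi0) (Or.inl hxit), one_mul]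
    exact_mod_cast hi
  · rintro ⟨hyM, hlt⟩
    refine ⟨hyM, fun a ha hdvd => ?_⟩
    have h1 : (1 : ℝ≥0∞) ≤ extractionGrade M a y := by
      apply le_sSup
      refine ⟨1, 1, one_pos, by simp, ?_⟩
      simpa using hdvd
    exact absurd (hlt a ha) (not_lt.mpr h1)
end

section
/- Let M be a reduced cancellative monoid and Q a nonempty set of nonzero elements of M that is linked to M. Then M = Ap(M,Q) + ⟨Q⟩, i.e., every element of M is a sum of an element of the Apéry set of Q and an element of the submonoid generated by Q. -/
/-- The Apéry set `Ap(M,Q) = M \ (Q + M)`. -/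
def AperyM {M : Type*} [AddCancelCommMonoid M] (Q : Set M) : Set M :=
  {x | ∀ q ∈ Q, ¬ MDvd q x}

/-- The sum `Σ_{q ∈ Q} λ_q q` encoded by a finitely supported function. -/
def fsum {M : Type*} [AddCancelCommMonoid M] (f : M →₀ ℕ) : M :=
  f.sum fun q n => n • q

/-- `Q` is linked to `M`: for each nonzero `x` there is a bound `c(x)` on `Σ λ_q`
over all finitely supported families with `Σ λ_q q ≤_M x`. -/
def LinkedM {M : Type*} [AddCancelCommMonoid M] (Q : Set M) : Prop :=
  ∀ x : M, x ≠ 0 → ∃ c : ℕ, ∀ f : M →₀ ℕ, (f.support : Set M) ⊆ Q →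
    MDvd (fsum f) x → (f.sum fun _ n => n) ≤ c

/-- if `Q` is a nonempty set of nonzero elements linked to `M`, then
`M = Ap(M,Q) + ⟨Q⟩`. -/
theorem apery_decomposition {M : Type*} [AddCancelCommMonoid M]
    (hred : ∀ a b : M, a + b = 0 → a = 0)
    (Q : Set M) (hne : Q.Nonempty) (h0 : (0 : M) ∉ Q) (hlink : LinkedM Q) :
    ∀ x : M, ∃ w ∈ AperyM Q, ∃ h ∈ AddSubmonoid.closure Q, x = w + h := by
  have fsum_add : ∀ f g : M →₀ ℕ, fsum (f + g) = fsum f + fsum g := by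
    intro f g
    unfold fsum
    exact Finsupp.sum_add_index' (fun a => zero_smul ℕ a) (fun a m n => add_smul m n a)
  have fsum_single : ∀ q : M, fsum (Finsupp.single q 1) = q := by
    intro q
    unfold fsum
    rw [Finsupp.sum_single_index (zero_smul ℕ q), one_smul]
  intro x
  by_cases hx : x = 0
  · refine ⟨0, ?_, 0, zero_mem _, by simp [hx]⟩
    rintro q hq ⟨z, hz⟩
    have hq0 := hred q z hz.symm
    exact h0 (hq0 ▸ hq)
  · obtain ⟨c, hc⟩ := hlink x hx
    set P : ℕ → Prop := fun n => ∃ f : M →₀ ℕ, (f.support : Set M) ⊆ Q ∧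
      MDvd (fsum f) x ∧ (f.sum fun _ n => n) = n with hP
    have hP0 : P 0 := ⟨0, by simp, ⟨x, by simp [fsum]⟩, by simp⟩
    classical
    set n := Nat.findGreatest P c with hn
    obtain ⟨f, hfQ, ⟨w, hw⟩, hfn⟩ := Nat.findGreatest_spec (Nat.zero_le c) hP0
    refine ⟨w, ?_, fsum f, ?_, by rw [hw, add_comm]⟩
    · rintro q hq ⟨z, hz⟩
      set f' : M →₀ ℕ := f + Finsupp.single q 1 with hf'
      have hsupp : (f'.support : Set M) ⊆ Q := by
        intro a ha
        have := Finsupp.support_add (g₁ := f) (g₂ := Finsupp.single q 1) ha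
        rcases Finset.mem_union.1 this with h | h
        · exact hfQ h
        · have := Finsupp.support_single_subset h
          simp only [Finset.mem_singleton] at this
          exact this ▸ hq
      have hdvd : MDvd (fsum f') x := by
        refine ⟨z, ?_⟩
        rw [hf', fsum_add, fsum_single, hw, hz, add_assoc]
      have hsum : (f'.sum fun _ n => n) = n + 1 := by
        rw [hf', Finsupp.sum_add_index' (fun _ => rfl) (fun _ _ _ => rfl), hfn,
          Finsupp.sum_single_index rfl]
      have hle : n + 1 ≤ c := by
        have := hc f' hsupp hdvd
        rwa [hsum] at this
      have : n + 1 ≤ n := Nat.le_findGreatest hle ⟨f', hsupp, hdvd, hsum⟩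
      omega
    · unfold fsum
      exact AddSubmonoid.sum_mem _ fun q hq =>
        AddSubmonoid.nsmul_mem _ (AddSubmonoid.subset_closure (hfQ hq)) _
end

section
/- Let M be an inside factorial monoid with base Q. Then Q is linked to M, and consequently M = Ap(M,Q) + ⟨Q⟩. -/
/-- `⟨Q⟩` is factorial, freely generated by `Q`: representations as `ℕ`-combinations
of elements of `Q` are unique. -/
def FreeOn {M : Type*} [AddCancelCommMonoid M] (Q : Set M) : Prop :=
  ∀ f g : M →₀ ℕ, (f.support : Set M) ⊆ Q → (g.support : Set M) ⊆ Q →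
    fsum f = fsum g → f = g

/-- `M` is inside factorial with base `Q`: `⟨Q⟩` is factorial freely generated by `Q`
and every nonzero element of `M` has a positive multiple in `⟨Q⟩`. -/
def InsideFactorial {M : Type*} [AddCancelCommMonoid M] (Q : Set M) : Prop :=
  FreeOn Q ∧ ∀ x : M, x ≠ 0 → ∃ m : ℕ, 0 < m ∧ m • x ∈ AddSubmonoid.closure Q

/-!
If `m • x = Σ g` and `x = Σ f + z` with `k • z = Σ h`, then `(k m) • f + m • h` and `k • g` have
the same sum, so by freeness of `⟨Q⟩` they coincide and comparing lengths gives `|f| ≤ |g|`.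
This bound holds for every `x`, zero included (take `m = 1`), so each `x` has a `Q`-divisor
`Σ f` of maximal length, and its cofactor `x - Σ f` lies in `Ap(M,Q)`.
-/

open Finsupp

section

variable {M : Type*} [AddCancelCommMonoid M] {Q : Set M}

lemma fsum_eq_linearCombination (f : M →₀ ℕ) : fsum f = linearCombination ℕ id f := rfl

lemma fsum_add (f g : M →₀ ℕ) : fsum (f + g) = fsum f + fsum g := by
  simp only [fsum_eq_linearCombination, map_add]

lemma fsum_nsmul (k : ℕ) (f : M →₀ ℕ) : fsum (k • f) = k • fsum f := by
  simp only [fsum_eq_linearCombination, map_nsmul]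

lemma fsum_single_one (q : M) : fsum (single q 1) = q := by
  simp [fsum_eq_linearCombination]

lemma mem_closure_iff_exists_fsum {x : M} :
    x ∈ AddSubmonoid.closure Q ↔ ∃ f ∈ supported ℕ ℕ Q, fsum f = x := by
  rw [← Submodule.span_nat_eq_addSubmonoidClosure, Submodule.mem_toAddSubmonoid,
    Submodule.mem_span_set]
  rfl

lemma FreeOn.degree_le_of_fsum_add_eq (hQ : FreeOn Q) {f h g : M →₀ ℕ}
    (hf : f ∈ supported ℕ ℕ Q) (hh : h ∈ supported ℕ ℕ Q) (hg : g ∈ supported ℕ ℕ Q)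
    (hsum : fsum f + fsum h = fsum g) : degree f ≤ degree g := by
  have hfh : f + h = g :=
    hQ _ _ (Submodule.add_mem _ hf hh) hg (by rw [fsum_add, hsum])
  rw [← hfh, map_add]
  exact Nat.le_add_right _ _

lemma InsideFactorial.exists_nsmul_eq_fsum (hQ : InsideFactorial Q) (x : M) :
    ∃ m, 0 < m ∧ ∃ g ∈ supported ℕ ℕ Q, fsum g = m • x := by
  obtain ⟨m, hm, hmx⟩ : ∃ m, 0 < m ∧ m • x ∈ AddSubmonoid.closure Q := by
    by_cases hx : x = 0
    · exact ⟨1, one_pos, by simp [hx, zero_mem]⟩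
    · exact hQ.2 x hx
  exact ⟨m, hm, mem_closure_iff_exists_fsum.1 hmx⟩

theorem InsideFactorial.exists_degree_bound (hQ : InsideFactorial Q) (x : M) :
    ∃ c, ∀ f ∈ supported ℕ ℕ Q, MDvd (fsum f) x → degree f ≤ c := by
  obtain ⟨m, hm, g, hg, hgx⟩ := hQ.exists_nsmul_eq_fsum x
  refine ⟨degree g, fun f hf ⟨z, hz⟩ => ?_⟩
  obtain ⟨k, hk, h, hh, hhz⟩ := hQ.exists_nsmul_eq_fsum z
  have hsum : fsum ((k * m) • f) + fsum (m • h) = fsum (k • g) := by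
    rw [fsum_nsmul, fsum_nsmul, fsum_nsmul, hgx, hhz, hz, smul_add, smul_add, smul_smul,
      smul_smul, smul_smul, mul_comm k m]
  have hdeg : k * m * degree f ≤ k * degree g := by
    simpa only [map_nsmul, smul_eq_mul] using
      hQ.1.degree_le_of_fsum_add_eq (Submodule.smul_mem _ _ hf) (Submodule.smul_mem _ _ hh)
        (Submodule.smul_mem _ _ hg) hsum
  refine Nat.le_of_mul_le_mul_left (le_trans ?_ hdeg) hk
  rw [mul_assoc]
  exact Nat.mul_le_mul_left k (Nat.le_mul_of_pos_left _ hm)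

theorem exists_mem_aperyM_add_of_degree_le {x : M} {c : ℕ}
    (hc : ∀ f ∈ supported ℕ ℕ Q, MDvd (fsum f) x → degree f ≤ c) :
    ∃ w ∈ AperyM Q, ∃ h ∈ AddSubmonoid.closure Q, x = w + h := by
  set S := {n | ∃ f ∈ supported ℕ ℕ Q, MDvd (fsum f) x ∧ degree f = n}
  have hne : S.Nonempty :=
    ⟨0, 0, zero_mem _, ⟨x, by simp [fsum_eq_linearCombination]⟩, map_zero _⟩
  have hbdd : BddAbove S := ⟨c, by rintro _ ⟨f, hf, hfx, rfl⟩; exact hc f hf hfx⟩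
  obtain ⟨f, hf, ⟨w, hw⟩, hdeg⟩ := Nat.sSup_mem hne hbdd
  refine ⟨w, ?_, fsum f, mem_closure_iff_exists_fsum.2 ⟨f, hf, rfl⟩, hw.trans (add_comm _ _)⟩
  rintro q hq ⟨z, rfl⟩
  have hmem : degree (f + single q 1) ∈ S :=
    ⟨_, Submodule.add_mem _ hf (single_mem_supported ℕ 1 hq),
      ⟨z, by rw [hw, fsum_add, fsum_single_one, add_assoc]⟩, rfl⟩
  have hle := le_csSup hbdd hmem
  rw [map_add, degree_single, hdeg] at hle
  omega

theorem InsideFactorial.linkedM (hQ : InsideFactorial Q) : LinkedM Q :=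
  fun x _ => hQ.exists_degree_bound x

end

theorem base_linked_of_insideFactorial_general {M : Type*} [AddCancelCommMonoid M]
    (Q : Set M) (hIF : InsideFactorial Q) :
    LinkedM Q ∧ ∀ x : M, ∃ w ∈ AperyM Q, ∃ h ∈ AddSubmonoid.closure Q, x = w + h := by
  refine ⟨hIF.linkedM, fun x => ?_⟩
  obtain ⟨c, hc⟩ := hIF.exists_degree_bound x
  exact exists_mem_aperyM_add_of_degree_le hc

/-- the base of an inside factorial monoid is linked to the monoid; in
particular `M = Ap(M,Q) + ⟨Q⟩`. -/
theorem base_linked_of_insideFactorial {M : Type*} [AddCancelCommMonoid M]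
    (hred : ∀ a b : M, a + b = 0 → a = 0)
    (Q : Set M) (hIF : InsideFactorial Q) :
    LinkedM Q ∧ ∀ x : M, ∃ w ∈ AperyM Q, ∃ h ∈ AddSubmonoid.closure Q, x = w + h :=
  base_linked_of_insideFactorial_general Q hIF
end
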